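/- arXiv:2203.10036 — 3 statements merged into one kernel-verified Lean document; each statement's English description precedes it below -/
import Mathlib

section
/- If W is the mixture that with probability p draws from U and with probability 1−p draws from V, where every vector in the support of U is orthogonal to every vector in the support of V, then α(W) ≤ p·α(U) + (1−p)·α(V). -/
open Finset

noncomputable section

/-- Dot product on `Fin d → ℝ`. -/
def dot {d : ℕ} (x y : Fin d → ℝ) : ℝ := ∑ i, x i * y i

/-- Coherence of a finitely-supported distribution `p` on vectors `v`. -/
def coh {d : ℕ} {ι : Type*} [Fintype ι] (p : ι → ℝ) (v : ι → Fin d → ℝ) : ℝ :=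
  (∑ i, ∑ j, p i * p j * dot (v i) (v j)) / (∑ i, p i * dot (v i) (v i))

lemma dot_self_nonneg {d : ℕ} (x : Fin d → ℝ) : 0 ≤ dot x x :=
  Finset.sum_nonneg fun i _ => mul_self_nonneg _

lemma dot_self_pos {d : ℕ} {x : Fin d → ℝ} (hx : x ≠ 0) : 0 < dot x x := by
  obtain ⟨k, hk⟩ := Function.ne_iff.mp hx
  exact Finset.sum_pos' (fun i _ => mul_self_nonneg _)
    ⟨k, mem_univ _, mul_self_pos.mpr hk⟩

lemma quad_nonneg {d : ℕ} {ι : Type*} [Fintype ι] (p : ι → ℝ) (v : ι → Fin d → ℝ) :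
    0 ≤ ∑ i, ∑ j, p i * p j * dot (v i) (v j) := by
  have h1 : ∑ i, ∑ j, p i * p j * dot (v i) (v j)
      = ∑ k, (∑ i, p i * v i k) * (∑ j, p j * v j k) := by
    calc ∑ i, ∑ j, p i * p j * dot (v i) (v j)
        = ∑ i, ∑ j, ∑ k, (p i * v i k) * (p j * v j k) := by
          refine Finset.sum_congr rfl fun i _ => Finset.sum_congr rfl fun j _ => ?_
          rw [dot, Finset.mul_sum]
          exact Finset.sum_congr rfl fun k _ => by ring
      _ = ∑ i, ∑ k, ∑ j, (p i * v i k) * (p j * v j k) :=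
          Finset.sum_congr rfl fun i _ => Finset.sum_comm
      _ = ∑ k, ∑ i, ∑ j, (p i * v i k) * (p j * v j k) := Finset.sum_comm
      _ = ∑ k, (∑ i, p i * v i k) * (∑ j, p j * v j k) := by
          refine Finset.sum_congr rfl fun k _ => ?_
          rw [Finset.sum_mul_sum]
  rw [h1]
  exact Finset.sum_nonneg fun k _ => mul_self_nonneg _

lemma final_ineq (A B C D p : ℝ) (hA : 0 ≤ A) (hC : 0 ≤ C) (hB : 0 < B) (hD : 0 < D)
    (hp : 0 < p) (hp' : p < 1) :
    (p ^ 2 * A + (1 - p) ^ 2 * C) / (p * B + (1 - p) * D)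
      ≤ p * (A / B) + (1 - p) * (C / D) := by
  have hden : 0 < p * B + (1 - p) * D := by nlinarith
  rw [div_le_iff₀ hden]
  have h : p * (A / B) + (1 - p) * (C / D) = (p * A * D + (1 - p) * C * B) / (B * D) := by
    field_simp
  rw [h, div_mul_eq_mul_div, le_div_iff₀ (by positivity)]
  nlinarith [mul_nonneg (mul_nonneg (mul_nonneg hp.le (sub_nonneg.2 hp'.le)) hA) (mul_self_nonneg D),
    mul_nonneg (mul_nonneg (mul_nonneg hp.le (sub_nonneg.2 hp'.le)) hC) (mul_self_nonneg B)]

theorem coherence_orthogonal_mixture {d a c : ℕ} (pp : ℝ) (hpp : 0 < pp) (hpp' : pp < 1)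
    (q : Fin a → ℝ) (u : Fin a → Fin d → ℝ)
    (r : Fin c → ℝ) (v : Fin c → Fin d → ℝ)
    (hq : ∀ i, 0 ≤ q i) (hqsum : ∑ i, q i = 1) (hqnz : ∃ i, 0 < q i ∧ u i ≠ 0)
    (hr : ∀ j, 0 ≤ r j) (hrsum : ∑ j, r j = 1) (hrnz : ∃ j, 0 < r j ∧ v j ≠ 0)
    (horth : ∀ i j, 0 < q i → 0 < r j → dot (u i) (v j) = 0) :
    coh (Sum.elim (fun i => pp * q i) (fun j => (1 - pp) * r j))
        (Sum.elim u v)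
      ≤ pp * coh q u + (1 - pp) * coh r v := by
  have cross : ∀ i j, q i * r j * dot (u i) (v j) = 0 := by
    intro i j
    rcases (hq i).lt_or_eq with h | h
    · rcases (hr j).lt_or_eq with h' | h'
      · rw [horth i j h h', mul_zero]
      · rw [← h', mul_zero, zero_mul]
    · rw [← h, zero_mul, zero_mul]
  have dotcomm : ∀ (x y : Fin d → ℝ), dot x y = dot y x := by
    intro x y; unfold dot; exact Finset.sum_congr rfl fun k _ => mul_comm _ _
  simp only [coh]
  set A := ∑ i, ∑ j, q i * q j * dot (u i) (u j) with hA_def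
  set B := ∑ i, q i * dot (u i) (u i) with hB_def
  set C := ∑ i, ∑ j, r i * r j * dot (v i) (v j) with hC_def
  set D := ∑ i, r i * dot (v i) (v i) with hD_def
  have hA : 0 ≤ A := quad_nonneg q u
  have hC : 0 ≤ C := quad_nonneg r v
  have hB : 0 < B := by
    obtain ⟨i0, hi0, hu0⟩ := hqnz
    exact Finset.sum_pos' (fun i _ => mul_nonneg (hq i) (dot_self_nonneg _))
      ⟨i0, mem_univ _, mul_pos hi0 (dot_self_pos hu0)⟩
  have hD : 0 < D := by
    obtain ⟨j0, hj0, hv0⟩ := hrnz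
    exact Finset.sum_pos' (fun j _ => mul_nonneg (hr j) (dot_self_nonneg _))
      ⟨j0, mem_univ _, mul_pos hj0 (dot_self_pos hv0)⟩
  have hnum : (∑ x : Fin a ⊕ Fin c, ∑ y : Fin a ⊕ Fin c,
      Sum.elim (fun i => pp * q i) (fun j => (1 - pp) * r j) x *
      Sum.elim (fun i => pp * q i) (fun j => (1 - pp) * r j) y *
      dot (Sum.elim u v x) (Sum.elim u v y)) = pp ^ 2 * A + (1 - pp) ^ 2 * C := by
    simp only [Fintype.sum_sum_type, Sum.elim_inl, Sum.elim_inr]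
    have e1 : ∀ i : Fin a, ∑ j : Fin c, pp * q i * ((1 - pp) * r j) * dot (u i) (v j) = 0 :=
      fun i => Finset.sum_eq_zero fun j _ => by
        linear_combination (pp * (1 - pp)) * cross i j
    have e2 : ∀ j : Fin c, ∑ i : Fin a, (1 - pp) * r j * (pp * q i) * dot (v j) (u i) = 0 :=
      fun j => Finset.sum_eq_zero fun i _ => by
        rw [dotcomm]; linear_combination (pp * (1 - pp)) * cross i j
    simp only [e1, e2, add_zero, zero_add]
    have hA' : ∑ i, ∑ i', pp * q i * (pp * q i') * dot (u i) (u i') = pp ^ 2 * A := by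
      rw [hA_def, Finset.mul_sum]
      refine Finset.sum_congr rfl fun i _ => ?_
      rw [Finset.mul_sum]
      exact Finset.sum_congr rfl fun i' _ => by ring
    have hC' : ∑ j, ∑ j', (1 - pp) * r j * ((1 - pp) * r j') * dot (v j) (v j')
        = (1 - pp) ^ 2 * C := by
      rw [hC_def, Finset.mul_sum]
      refine Finset.sum_congr rfl fun j _ => ?_
      rw [Finset.mul_sum]
      exact Finset.sum_congr rfl fun j' _ => by ring
    rw [hA', hC']
  have hden : (∑ x : Fin a ⊕ Fin c,
      Sum.elim (fun i => pp * q i) (fun j => (1 - pp) * r j) x *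
      dot (Sum.elim u v x) (Sum.elim u v x)) = pp * B + (1 - pp) * D := by
    simp only [Fintype.sum_sum_type, Sum.elim_inl, Sum.elim_inr]
    rw [hB_def, hD_def, Finset.mul_sum, Finset.mul_sum]
    congr 1
    · exact Finset.sum_congr rfl fun i _ => by ring
    · exact Finset.sum_congr rfl fun j _ => by ring
  rw [hnum, hden]
  exact final_ineq A B C D pp hA hC hB hD hpp hpp'
end
end

section
/- If a distribution W picks uniformly from the disjoint union of a set U of k vectors and a set V of m−k vectors, where the elements of V are pairwise orthogonal and orthogonal to every element of U, then α(W) ≤ (k/m)·α(U_unif) + 1/m, where U_unif is the uniform distribution on U. -/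
open Finset

noncomputable section

lemma dot_comm {d : ℕ} (x y : Fin d → ℝ) : dot x y = dot y x := by
  unfold dot; exact Finset.sum_congr rfl fun i _ => mul_comm _ _

lemma sum_dot_nonneg {d n : ℕ} (u : Fin n → Fin d → ℝ) :
    0 ≤ ∑ i, ∑ j, dot (u i) (u j) := by
  have h : ∑ i, ∑ j, dot (u i) (u j) = ∑ t, (∑ i, u i t) ^ 2 := by
    unfold dot
    simp_rw [sq, Finset.sum_mul_sum]
    rw [show (∑ i, ∑ j, ∑ t, u i t * u j t) = ∑ i, ∑ t, ∑ j, u i t * u j t from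
      Finset.sum_congr rfl fun i _ => Finset.sum_comm]
    exact Finset.sum_comm
  rw [h]; positivity

theorem coherence_fitted_bound {d k c : ℕ} (hk : 0 < k) (hc : 0 < c)
    (u : Fin k → Fin d → ℝ) (v : Fin c → Fin d → ℝ)
    (hunz : ∃ i, u i ≠ 0) (hvnz : ∀ j, v j ≠ 0)
    (hvorth : ∀ j j', j ≠ j' → dot (v j) (v j') = 0)
    (huv : ∀ i j, dot (u i) (v j) = 0) :
    coh (fun _ : Sum (Fin k) (Fin c) => ((k + c : ℕ) : ℝ)⁻¹) (Sum.elim u v)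
      ≤ ((k : ℝ) / ((k + c : ℕ) : ℝ)) * coh (fun _ : Fin k => (k : ℝ)⁻¹) u
        + 1 / ((k + c : ℕ) : ℝ) := by
  set N := ∑ i, ∑ j, dot (u i) (u j) with hNdef
  set A := ∑ i, dot (u i) (u i) with hAdef
  set B := ∑ j, dot (v j) (v j) with hBdef
  have hN : 0 ≤ N := sum_dot_nonneg u
  have hA : 0 < A := by
    obtain ⟨i, hi⟩ := hunz
    exact Finset.sum_pos' (fun j _ => dot_self_nonneg _)
      ⟨i, Finset.mem_univ i, dot_self_pos hi⟩
  have hB : 0 < B :=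
    Finset.sum_pos (fun j _ => dot_self_pos (hvnz j)) ⟨⟨0, hc⟩, Finset.mem_univ _⟩
  have hvu : ∀ i j, dot (v i) (u j) = 0 := fun i j => (dot_comm _ _).trans (huv j i)
  have hvv : ∀ j : Fin c, ∑ j' : Fin c, dot (v j) (v j') = dot (v j) (v j) := by
    intro j
    rw [Finset.sum_eq_single j (fun j' _ h => hvorth j j' (Ne.symm h)) (by simp)]
  have hm : (0:ℝ) < ((k + c : ℕ) : ℝ) := by positivity
  have hk' : (0:ℝ) < (k : ℝ) := by exact_mod_cast hk
  unfold coh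
  rw [Fintype.sum_sum_type, Fintype.sum_sum_type]
  simp only [Sum.elim_inl, Sum.elim_inr, Fintype.sum_sum_type, huv, hvu, mul_zero,
    Finset.sum_const_zero, add_zero, zero_add]
  simp_rw [← Finset.mul_sum, hvv]
  rw [div_le_iff₀ (by positivity)]
  rw [← hNdef, ← hAdef, ← hBdef]
  have hAB : (0:ℝ) < A + B := by linarith
  set m : ℝ := ((k + c : ℕ) : ℝ) with hmdef
  have key : m⁻¹ * m⁻¹ * N + m⁻¹ * m⁻¹ * B ≤
      ((k:ℝ) / m * (((k:ℝ)⁻¹ * (k:ℝ)⁻¹ * N) / ((k:ℝ)⁻¹ * A)) + 1 / m) *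
        (m⁻¹ * A + m⁻¹ * B) := by
    rw [← sub_nonneg]
    have heq : ((k:ℝ) / m * (((k:ℝ)⁻¹ * (k:ℝ)⁻¹ * N) / ((k:ℝ)⁻¹ * A)) + 1 / m) *
        (m⁻¹ * A + m⁻¹ * B) - (m⁻¹ * m⁻¹ * N + m⁻¹ * m⁻¹ * B)
        = (N * B + A * A) / (m * m * A) := by
      field_simp
      ring
    rw [heq]
    positivity
  exact key
end
end

section
/- One-step divergence bound for SGD: if two SGD runs on datasets S and S^{(i)} (differing only in the i-th example) share all randomness, then δ_t ≤ (1 + η_t·β)·δ_{t−1} + (η_t·I_t/b)·‖g(w_{t−1}, z_i) − g(w_{t−1}, z_i')‖, where δ_t is the parameter distance at step t, I_t indicates whether example i is in the minibatch at step t, b is the batch size, and β is the gradient-Lipschitz constant of the loss. -/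
open Finset

noncomputable section

theorem sgd_one_step_expansion {E Z : Type*} [NormedAddCommGroup E] [NormedSpace ℝ E]
    {m b : ℕ} (hb : 0 < b)
    (g : E → Z → E) (β : ℝ) (hβ : 0 ≤ β)
    (hsmooth : ∀ z (w w' : E), ‖g w z - g w' z‖ ≤ β * ‖w - w'‖)
    (η : ℝ) (hη : 0 ≤ η)
    (S : Fin m → Z) (i : Fin m) (zi' : Z)
    (B : Fin b ↪ Fin m)
    (w w' : E) :
    ‖(w - (η / (b : ℝ)) • ∑ j, g w (S (B j))) -
      (w' - (η / (b : ℝ)) • ∑ j, g w' (Function.update S i zi' (B j)))‖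
    ≤ (1 + η * β) * ‖w - w'‖ +
      (η * (if ∃ j, B j = i then (1 : ℝ) else 0) / (b : ℝ)) *
        ‖g w (S i) - g w zi'‖ := by
  set S' := Function.update S i zi' with hS'
  set D1 : E := ∑ j, (g w (S (B j)) - g w (S' (B j))) with hD1
  set D2 : E := ∑ j, (g w (S' (B j)) - g w' (S' (B j))) with hD2
  have hbR : (0 : ℝ) < (b : ℝ) := by exact_mod_cast hb
  have key : (w - (η / (b : ℝ)) • ∑ j, g w (S (B j))) -
      (w' - (η / (b : ℝ)) • ∑ j, g w' (S' (B j)))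
      = (w - w') - (η / (b : ℝ)) • (D1 + D2) := by
    rw [hD1, hD2, ← Finset.sum_add_distrib]
    simp only [sub_add_sub_cancel, Finset.sum_sub_distrib, smul_sub]
    abel
  rw [key]
  have hind : ‖D1‖ ≤ (if ∃ j, B j = i then (1 : ℝ) else 0) * ‖g w (S i) - g w zi'‖ := by
    by_cases h : ∃ j, B j = i
    · obtain ⟨j0, hj0⟩ := h
      have : D1 = g w (S i) - g w zi' := by
        rw [hD1, Finset.sum_eq_single j0]
        · rw [hj0, hS', Function.update_self]
        · intro j _ hne
          have hBne : B j ≠ i := fun hc => hne (B.injective (hc.trans hj0.symm))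
          rw [hS', Function.update_of_ne hBne, sub_self]
        · simp
      rw [this, if_pos ⟨j0, hj0⟩, one_mul]
    · have : D1 = 0 := by
        rw [hD1]
        apply Finset.sum_eq_zero
        intro j _
        have hBne : B j ≠ i := fun hc => h ⟨j, hc⟩
        rw [hS', Function.update_of_ne hBne, sub_self]
      rw [this, if_neg h, norm_zero, zero_mul]
  have hD2b : ‖D2‖ ≤ (b : ℝ) * (β * ‖w - w'‖) := by
    calc ‖D2‖ ≤ ∑ j : Fin b, ‖g w (S' (B j)) - g w' (S' (B j))‖ :=
          norm_sum_le _ _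
      _ ≤ ∑ _j : Fin b, β * ‖w - w'‖ :=
          Finset.sum_le_sum fun j _ => hsmooth _ _ _
      _ = (b : ℝ) * (β * ‖w - w'‖) := by simp [mul_comm]
  have h1 : ‖(w - w') - (η / (b : ℝ)) • (D1 + D2)‖
      ≤ ‖w - w'‖ + (η / (b : ℝ)) * (‖D1‖ + ‖D2‖) := by
    refine (norm_sub_le _ _).trans ?_
    gcongr
    rw [norm_smul, Real.norm_eq_abs, abs_of_nonneg (by positivity)]
    gcongr
    exact norm_add_le _ _
  refine h1.trans ?_
  have hη' : 0 ≤ η / (b : ℝ) := by positivity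
  have : (η / (b : ℝ)) * (‖D1‖ + ‖D2‖)
      ≤ (η / (b : ℝ)) * ((if ∃ j, B j = i then (1 : ℝ) else 0) * ‖g w (S i) - g w zi'‖
          + (b : ℝ) * (β * ‖w - w'‖)) :=
    mul_le_mul_of_nonneg_left (add_le_add hind hD2b) hη'
  refine (add_le_add_right this _).trans (le_of_eq ?_)
  have hb0 : (b : ℝ) ≠ 0 := ne_of_gt hbR
  split_ifs <;> field_simp <;> ring
end
end
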